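/- arXiv:2110.01138 — 5 statements merged into one kernel-verified Lean document; each statement's English description precedes it below -/
import Mathlib

section
/- Let X, Y, Z be T₀ topological spaces, let k : X → Y be a continuous map such that k(X) is b-dense in Y, and let f : X → Z be a continuous map. If g : Y → Z is a continuous map satisfying g ∘ k = f, then g(Y) is contained in the b-closure of f(X) in Z (the closure of f(X) in the b-topology of Z). -/
open TopologicalSpace

/-- The b-topology associated with a topological space `(X, t)`: the topology with base
`{U ∩ cl({x}) : x ∈ U, U open}`. -/
def bTop (X : Type) (t : TopologicalSpace X) : TopologicalSpace X :=
  TopologicalSpace.generateFrom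
    {s | ∃ (U : Set X) (x : X), @IsOpen X t U ∧ x ∈ U ∧ s = U ∩ @closure X t {x}}

/-- The specialization order of `(X, t)`: `x ≤ y` iff `x ∈ cl({y})`. -/
def specLE {X : Type} (t : TopologicalSpace X) (x y : X) : Prop :=
  x ∈ @closure X t {y}

/-- The subspace topology on a subset. -/
def subTop {X : Type} (t : TopologicalSpace X) (A : Set X) : TopologicalSpace A :=
  TopologicalSpace.induced Subtype.val t

/-- A class of topological spaces, viewed as the object class of a full subcategory of Top. -/
abbrev SpaceClass : Type 1 := (X : Type) → TopologicalSpace X → Prop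

/-- All members of `K` are T₀ (i.e. `K` is a subcategory of `Top₀`). -/
def AllT0 (K : SpaceClass) : Prop := ∀ X t, K X t → @T0Space X t

/-- `K` is closed under homeomorphisms. -/
def ClosedUnderHomeo (K : SpaceClass) : Prop :=
  ∀ (X Y : Type) (tX : TopologicalSpace X) (tY : TopologicalSpace Y),
    K X tX → Nonempty (@Homeomorph X Y tX tY) → K Y tY

/-- `K ⊄ Top₁`: `K` contains a space that is not T₁. -/
def NotSubT1 (K : SpaceClass) : Prop := ∃ X t, K X t ∧ ¬ @T1Space X t

/-- `μ : X → Xk` is a K-reflection for `X`: `Xk ∈ K`, `μ` is continuous and every continuous map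
from `X` to a member of `K` factors uniquely (continuously) through `μ`. -/
def IsReflection (K : SpaceClass) {X Xk : Type} (tX : TopologicalSpace X)
    (tk : TopologicalSpace Xk) (μ : X → Xk) : Prop :=
  K Xk tk ∧ @Continuous X Xk tX tk μ ∧
    ∀ (Z : Type) (tZ : TopologicalSpace Z), K Z tZ →
      ∀ f : X → Z, @Continuous X Z tX tZ f →
        ∃! g : Xk → Z, @Continuous Xk Z tk tZ g ∧ g ∘ μ = f

/-- `K` is reflective in `Top₀`: every T₀ space admits a K-reflection. -/
def IsReflective (K : SpaceClass) : Prop :=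
  ∀ (X : Type) (tX : TopologicalSpace X), @T0Space X tX →
    ∃ (Xk : Type) (tk : TopologicalSpace Xk) (μ : X → Xk), IsReflection K tX tk μ

/-- `K` is b-closed-hereditary. -/
def BClosedHereditary (K : SpaceClass) : Prop :=
  ∀ (X : Type) (tX : TopologicalSpace X) (A : Set X),
    K X tX → @IsClosed X (bTop X tX) A → K A (subTop tX A)

/-- `K` is productive. -/
def Productive (K : SpaceClass) : Prop :=
  ∀ (I : Type) (X : I → Type) (t : ∀ i, TopologicalSpace (X i)),
    (∀ i, K (X i) (t i)) → K (∀ i, X i) (@Pi.topologicalSpace I X t)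

/-- `K` has equalizers. -/
def HasEqualizers (K : SpaceClass) : Prop :=
  ∀ (X Y : Type) (tX : TopologicalSpace X) (tY : TopologicalSpace Y),
    K X tX → K Y tY → ∀ f g : X → Y, @Continuous X Y tX tY f → @Continuous X Y tX tY g →
      K {x | f x = g x} (subTop tX {x | f x = g x})

/-- `(X, t)` is sober: T₀ and every irreducible closed set is the closure of a point. -/
def Sober (X : Type) (t : TopologicalSpace X) : Prop := @T0Space X t ∧ @QuasiSober X t

open Topology

lemma isOpen_bTop_inter_closure {X : Type} [t : TopologicalSpace X] {U : Set X} {x : X}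
    (hU : IsOpen U) (hx : x ∈ U) : IsOpen[bTop X t] (U ∩ closure {x}) :=
  isOpen_generateFrom_of_mem ⟨U, x, hU, hx, rfl⟩

/-- A continuous map preserves specialization, so it maps `cl({y})` into `cl({g y})`; hence the
preimage of a basic b-open set `U ∩ cl({z})` contains, around each of its points `y`, the basic
b-open set `g⁻¹(U) ∩ cl({y})`. -/
lemma Continuous.bTop {Y Z : Type} [tY : TopologicalSpace Y] [tZ : TopologicalSpace Z]
    {g : Y → Z} (hg : Continuous g) : Continuous[bTop Y tY, bTop Z tZ] g := by
  refine continuous_generateFrom_iff.2 ?_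
  rintro _ ⟨U, z, hU, -, rfl⟩
  refine (@isOpen_iff_forall_mem_open _ (_root_.bTop Y tY) _).2 fun y ⟨hyU, hzy⟩ ↦
    ⟨g ⁻¹' U ∩ closure {y}, ?_, isOpen_bTop_inter_closure (hU.preimage hg) hyU,
      hyU, subset_closure rfl⟩
  rintro y' ⟨hy'U, hyy'⟩
  have hzy : z ⤳ g y := specializes_iff_mem_closure.2 hzy
  have hyy' : y ⤳ y' := specializes_iff_mem_closure.2 hyy'
  exact ⟨hy'U, specializes_iff_mem_closure.1 (hzy.trans (hyy'.map hg))⟩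

theorem statement2_general {X Y Z : Type}
    [tY : TopologicalSpace Y] [tZ : TopologicalSpace Z]
    (k : X → Y) (hdense : @Dense Y (bTop Y tY) (Set.range k))
    (f : X → Z)
    (g : Y → Z) (hg : Continuous g) (hfk : g ∘ k = f) :
    Set.range g ⊆ @closure Z (bTop Z tZ) (Set.range f) := by
  calc Set.range g = g '' closure[bTop Y tY] (Set.range k) := by
        rw [@Dense.closure_eq _ (bTop Y tY) _ hdense, Set.image_univ]
    _ ⊆ closure[bTop Z tZ] (g '' Set.range k) :=
      @image_closure_subset_closure_image _ _ (bTop Y tY) (bTop Z tZ) _ _ hg.bTop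
    _ = closure[bTop Z tZ] (Set.range f) := by rw [← Set.range_comp, hfk]

/-- if `k : X → Y` is continuous with b-dense range, `f : X → Z` is continuous and
`g : Y → Z` is continuous with `g ∘ k = f`, then `g(Y)` is contained in the b-closure of `f(X)`
in `Z`. -/
theorem statement2 {X Y Z : Type}
    [tX : TopologicalSpace X] [tY : TopologicalSpace Y] [tZ : TopologicalSpace Z]
    [T0Space X] [T0Space Y] [T0Space Z]
    (k : X → Y) (hk : Continuous k) (hdense : @Dense Y (bTop Y tY) (Set.range k))
    (f : X → Z) (hf : Continuous f)
    (g : Y → Z) (hg : Continuous g) (hfk : g ∘ k = f) :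
    Set.range g ⊆ @closure Z (bTop Z tZ) (Set.range f) :=
  statement2_general (tY := tY) (tZ := tZ) k hdense f g hg hfk
end

section
/- Let K be a reflective full subcategory of Top₀ closed under homeomorphisms such that K ⊄ Top₁. Then every sober space belongs to K, i.e., Sob ⊆ K. -/
open TopologicalSpace

/-!
A reflective subcategory of `Top₀` is closed under the limits `Top₀` has, products and equalizers
in particular: for a limit `A`, the universal property yields a continuous left inverse of the
reflection map `A → Aᴷ`, and uniqueness of factorisations makes it a two-sided inverse. A `T₀` space
that is not `T₁` has two points `x ⤳ y`, `x ≠ y`, spanning a retract homeomorphic to Sierpiński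
space, so Sierpiński space lies in `K`. A sober space `X` is homeomorphic to the space of frame
homomorphisms `Opens X → Prop`, which is the equalizer of two maps between powers of Sierpiński
space.
-/

open Topology TopologicalSpace

section Reflection

variable {K : SpaceClass}

theorem IsReflection.hom_ext {A Ak Z : Type} [tA : TopologicalSpace A] [tk : TopologicalSpace Ak]
    [tZ : TopologicalSpace Z] {μ : A → Ak} (hμ : IsReflection K tA tk μ) (hZ : K Z tZ)
    {g₁ g₂ : Ak → Z} (hg₁ : Continuous g₁) (hg₂ : Continuous g₂) (h : g₁ ∘ μ = g₂ ∘ μ) :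
    g₁ = g₂ := by
  obtain ⟨_, _, huniq⟩ := hμ.2.2 Z tZ hZ (g₂ ∘ μ) (hg₂.comp hμ.2.1)
  exact (huniq g₁ ⟨hg₁, h⟩).trans (huniq g₂ ⟨hg₂, rfl⟩).symm

theorem IsReflection.mem_of_leftInverse (hHomeo : ClosedUnderHomeo K) {A Ak : Type}
    [tA : TopologicalSpace A] [tk : TopologicalSpace Ak] {μ : A → Ak}
    (hμ : IsReflection K tA tk μ) {g : Ak → A} (hg : Continuous g)
    (hgμ : Function.LeftInverse g μ) : K A tA := by
  have hμg : Function.RightInverse g μ := congrFun <|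
    hμ.hom_ext hμ.1 (hμ.2.1.comp hg) continuous_id (funext fun a => congrArg μ (hgμ a))
  exact hHomeo Ak A tk tA hμ.1
    ⟨{ toFun := g, invFun := μ, left_inv := hμg, right_inv := hgμ,
       continuous_toFun := hg, continuous_invFun := hμ.2.1 }⟩

theorem IsReflective.productive (hRefl : IsReflective K) (hT0 : AllT0 K)
    (hHomeo : ClosedUnderHomeo K) : Productive K := by
  intro I X t hX
  let _ := t
  have := fun i => hT0 _ _ (hX i)
  obtain ⟨Pk, tk, μ, hμ⟩ := hRefl (∀ i, X i) _ inferInstance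
  choose g hg hgμ using fun i => (hμ.2.2 (X i) (t i) (hX i) _ (continuous_apply i)).exists
  exact hμ.mem_of_leftInverse hHomeo (continuous_pi hg) fun p => funext fun i => congrFun (hgμ i) p

theorem IsReflective.hasEqualizers (hRefl : IsReflective K) (hT0 : AllT0 K)
    (hHomeo : ClosedUnderHomeo K) : HasEqualizers K := by
  intro X Y tX tY hX hY f g hf hg
  let _ := tX
  have := hT0 X tX hX
  obtain ⟨Ek, tk, μ, hμ⟩ := hRefl {x | f x = g x} inferInstance inferInstance
  obtain ⟨j, ⟨hj, hjμ⟩, -⟩ := hμ.2.2 X tX hX Subtype.val continuous_subtype_val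
  have hfj : f ∘ j = g ∘ j := hμ.hom_ext hY (hf.comp hj) (hg.comp hj) <| by
    rw [Function.comp_assoc, Function.comp_assoc, hjμ]
    exact funext fun x => x.2
  exact hμ.mem_of_leftInverse hHomeo (hj.subtype_mk fun y => congrFun hfj y)
    fun x => Subtype.ext (congrFun hjμ x)

theorem IsReflective.mem_of_retract (hRefl : IsReflective K) (hHomeo : ClosedUnderHomeo K)
    {A Z : Type} [tA : TopologicalSpace A] [T0Space A] [tZ : TopologicalSpace Z] (hZ : K Z tZ)
    {i : A → Z} {r : Z → A} (hi : Continuous i) (hr : Continuous r)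
    (hri : Function.LeftInverse r i) : K A tA := by
  obtain ⟨Ak, tk, μ, hμ⟩ := hRefl A tA inferInstance
  obtain ⟨j, ⟨hj, hjμ⟩, -⟩ := hμ.2.2 Z tZ hZ i hi
  exact hμ.mem_of_leftInverse hHomeo (hr.comp hj) fun a => by
    rw [Function.comp_apply, ← Function.comp_apply (f := j), hjμ, hri a]

end Reflection

open Classical in
theorem continuous_ite_prop {Z : Type*} [TopologicalSpace Z] {x y : Z} (h : x ⤳ y) :
    Continuous fun p : Prop => if p then x else y := by
  refine continuous_def.2 fun V hV => IsUpperSet.isOpen_iff_isUpperSet.2 fun p q hpq hp => ?_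
  by_cases hq : q
  · by_cases hp' : p
    · simpa [hp', hq] using hp
    · simpa [hq] using h.mem_open hV (by simpa [hp'] using hp)
  · simp_all

theorem exists_specializes_notMem_open_of_not_t1Space {Z : Type*} [TopologicalSpace Z]
    [T0Space Z] (h : ¬ T1Space Z) : ∃ x y : Z, x ⤳ y ∧ ∃ U, IsOpen U ∧ x ∈ U ∧ y ∉ U := by
  obtain ⟨x, y, hxy, hne⟩ : ∃ x y : Z, x ⤳ y ∧ x ≠ y := by
    simpa [t1Space_iff_specializes_imp_eq] using h
  have hyx : ¬ y ⤳ x := fun hyx => hne (hxy.antisymm hyx).eq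
  simp only [specializes_iff_forall_open, not_forall] at hyx
  obtain ⟨U, hU, hxU, hyU⟩ := hyx
  exact ⟨x, y, hxy, U, hU, hxU, hyU⟩

theorem IsReflective.prop_mem {K : SpaceClass} (hRefl : IsReflective K) (hT0 : AllT0 K)
    (hHomeo : ClosedUnderHomeo K) (hNotT1 : NotSubT1 K) : K Prop inferInstance := by
  obtain ⟨Z, tZ, hZ, hnT1⟩ := hNotT1
  have := hT0 Z tZ hZ
  obtain ⟨x, y, hxy, U, hU, hxU, hyU⟩ := exists_specializes_notMem_open_of_not_t1Space hnT1
  refine hRefl.mem_of_retract hHomeo hZ (continuous_ite_prop hxy)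
    (continuous_Prop.2 hU : Continuous (· ∈ U)) fun p => ?_
  by_cases hp : p <;> simp [hp, hxU, hyU]

section FramePoints

variable {L : Type*}

/-- Finite meets are tested through `Finset.inf`, so the empty finset accounts for `⊤`. -/
def frameEqLHS [CompleteLattice L] (φ : L → Prop) : Finset L ⊕ Set L → Prop
  | .inl s => φ (s.inf id)
  | .inr S => φ (sSup S)

def frameEqRHS (φ : L → Prop) : Finset L ⊕ Set L → Prop
  | .inl s => ∀ a ∈ s, φ a
  | .inr S => ∃ a ∈ S, φ a

theorem frameEqLHS_eq_frameEqRHS_iff [CompleteLattice L] {φ : L → Prop} :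
    frameEqLHS φ = frameEqRHS φ ↔ ∃ p : FrameHom L Prop, ⇑p = φ := by
  classical
  constructor
  · intro h
    have hinf (s : Finset L) : φ (s.inf id) ↔ ∀ a ∈ s, φ a := iff_of_eq (congrFun h (.inl s))
    have hsup (S : Set L) : φ (sSup S) ↔ ∃ a ∈ S, φ a := iff_of_eq (congrFun h (.inr S))
    exact ⟨{ toFun := φ
             map_inf' a b := by simpa using hinf {a, b}
             map_top' := by simpa using hinf ∅
             map_sSup' S := by simpa [sSup_image] using hsup S }, rfl⟩
  · rintro ⟨p, rfl⟩
    funext i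
    rcases i with s | S
    · simp only [frameEqLHS, frameEqRHS, map_finset_inf, eq_iff_iff]
      simp [Finset.inf_eq_iInf]
    · simp [frameEqLHS, frameEqRHS, sSup_image]

theorem continuous_frameEqLHS [CompleteLattice L] : Continuous (frameEqLHS : (L → Prop) → _) :=
  continuous_pi fun i => by rcases i with s | S <;> exact continuous_apply _

theorem continuous_frameEqRHS : Continuous (frameEqRHS : (L → Prop) → _) := by
  refine continuous_pi fun i => continuous_Prop.2 ?_
  rcases i with s | S
  · simpa only [frameEqRHS, Set.ofPred_forall] using
      isOpen_biInter_finset fun a _ => continuous_Prop.1 (continuous_apply a)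
  · have hS : {φ : L → Prop | ∃ a ∈ S, φ a} = ⋃ a ∈ S, {φ | φ a} := by ext; simp
    simpa only [frameEqRHS, hS] using
      isOpen_biUnion fun a _ => continuous_Prop.1 (continuous_apply a)

end FramePoints

theorem exists_productOfMemOpens_eq_of_frameHom {X : Type*} [TopologicalSpace X] [QuasiSober X]
    (p : FrameHom (Opens X) Prop) : ∃ x, productOfMemOpens X x = ⇑p := by
  -- `C` is the largest open set on which `p` fails, and `p` tests for meeting `Cᶜ`.
  set C : Opens X := sSup {U | ¬ p U}
  have hC : ¬ p C := by simp [C, map_sSup, sSup_image]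
  have hmeets (U : Opens X) : p U ↔ ((C : Set X)ᶜ ∩ U).Nonempty := by
    constructor
    · intro hU
      by_contra hempty
      refine hC (OrderHomClass.mono p (fun x hxU => ?_) hU)
      by_contra hxC
      exact hempty ⟨x, hxC, hxU⟩
    · rintro ⟨x, hxC, hxU⟩
      by_contra hU
      exact hxC (le_sSup (s := {U | ¬ p U}) hU hxU)
  have hirr : IsIrreducible (C : Set X)ᶜ := by
    refine ⟨by simpa using (hmeets ⊤).1 (by simp), fun u v hu hv hCu hCv => ?_⟩
    have huv : p (⟨u, hu⟩ ⊓ ⟨v, hv⟩) := by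
      rw [map_inf]
      exact ⟨(hmeets ⟨u, hu⟩).2 hCu, (hmeets ⟨v, hv⟩).2 hCv⟩
    simpa using (hmeets _).1 huv
  obtain ⟨x, hx⟩ := QuasiSober.sober hirr C.isOpen.isClosed_compl
  exact ⟨x, funext fun U => propext ((hx.mem_open_set_iff U.isOpen).trans (hmeets U).symm)⟩

theorem range_productOfMemOpens {X : Type*} [TopologicalSpace X] [QuasiSober X] :
    Set.range (productOfMemOpens X) = {φ | frameEqLHS φ = frameEqRHS φ} := by
  ext φ
  rw [Set.mem_ofPred_eq, frameEqLHS_eq_frameEqRHS_iff]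
  constructor
  · rintro ⟨x, rfl⟩
    exact ⟨Locale.localePointOfSpacePoint X x, rfl⟩
  · rintro ⟨p, rfl⟩
    exact exists_productOfMemOpens_eq_of_frameHom p

theorem mem_of_quasiSober {K : SpaceClass} (hHomeo : ClosedUnderHomeo K) (hProd : Productive K)
    (hEq : HasEqualizers K) (hProp : K Prop inferInstance) (X : Type) [tX : TopologicalSpace X]
    [T0Space X] [QuasiSober X] : K X tX := by
  have hpow (I : Type) : K (I → Prop) Pi.topologicalSpace := hProd I _ _ fun _ => hProp
  have hE := hEq _ _ _ _ (hpow (Opens X)) (hpow (Finset (Opens X) ⊕ Set (Opens X)))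
    frameEqLHS frameEqRHS continuous_frameEqLHS continuous_frameEqRHS
  exact hHomeo _ _ _ _ hE ⟨((productOfMemOpens_isEmbedding X).toHomeomorph.trans
    (Homeomorph.setCongr range_productOfMemOpens)).symm⟩

/-- a reflective full subcategory of Top₀ closed under homeomorphisms containing a
non-T₁ space contains every sober space. -/
theorem statement5 (K : SpaceClass) (hT0 : AllT0 K) (hHomeo : ClosedUnderHomeo K)
    (hRefl : IsReflective K) (hNotT1 : NotSubT1 K) :
    ∀ (X : Type) (tX : TopologicalSpace X), Sober X tX → K X tX := by
  rintro X tX ⟨_, _⟩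
  exact mem_of_quasiSober hHomeo (hRefl.productive hT0 hHomeo) (hRefl.hasEqualizers hT0 hHomeo)
    (hRefl.prop_mem hT0 hHomeo hNotT1) X
end

section
/- Let K be a full subcategory of Top₀ closed under homeomorphisms such that K ⊄ Top₁. Then K is reflective in Top₀ if and only if K is productive and b-closed-hereditary. -/
open TopologicalSpace

/-!
If `K` is reflective, it is closed under the limits of `Top₀`, in particular under products and
equalizers. A non-T₁ member `Z` of `K` has points `b ⤳ a` with `b ≠ a`, and for `U` open and
`C` closed the two-valued maps `χ_U, χ_{U \ C} : X → Z` are continuous and agree exactly off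
`U ∩ C`; since a b-closed set is an intersection of sets `(U ∩ cl {x})ᶜ`, it is an equalizer of
two maps into a power of `Z`.

Conversely, the reflection of `X` is the b-closure of the image of `X` in a product of members
of `K` under `X`. Continuous maps into a T₀ space that agree on a set agree on its b-closure,
which gives uniqueness of factorizations. For the product to be small, note that a map
`f : X → Z` into a member of `K` corestricts to the b-closure `D` of `f(X)`, which lies in `K`
and embeds into `Set X` via `p ↦ f⁻¹(cl {p})`.
-/

open Set Topology

section BTopology

variable {X : Type} [t : TopologicalSpace X]

def bClosure (S : Set X) : Set X := @closure X (bTop X t) S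

lemma subset_bClosure (S : Set X) : S ⊆ bClosure S := @subset_closure X (bTop X t) S

lemma isTopologicalBasis_bTop :
    @IsTopologicalBasis X (bTop X t)
      {s | ∃ (U : Set X) (x : X), IsOpen U ∧ x ∈ U ∧ s = U ∩ closure {x}} := by
  refine @IsTopologicalBasis.mk X (bTop X t) _ ?_ ?_ rfl
  · rintro _ ⟨U, x, hU, -, rfl⟩ _ ⟨V, y, hV, -, rfl⟩ z ⟨⟨hzU, hzx⟩, hzV, hzy⟩
    refine ⟨(U ∩ V) ∩ closure {z}, ⟨U ∩ V, z, hU.inter hV, ⟨hzU, hzV⟩, rfl⟩,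
      ⟨⟨hzU, hzV⟩, subset_closure rfl⟩, ?_⟩
    rintro w ⟨⟨hwU, hwV⟩, hwz⟩
    exact ⟨⟨hwU, closure_minimal (singleton_subset_iff.2 hzx) isClosed_closure hwz⟩, hwV,
      closure_minimal (singleton_subset_iff.2 hzy) isClosed_closure hwz⟩
  · refine sUnion_eq_univ_iff.2 fun z => ?_
    exact ⟨univ ∩ closure {z}, ⟨univ, z, isOpen_univ, mem_univ z, rfl⟩, mem_univ z,
      subset_closure rfl⟩

lemma mem_bClosure_iff {S : Set X} {p : X} :
    p ∈ bClosure S ↔ ∀ U, IsOpen U → p ∈ U → ∃ s ∈ S, s ∈ U ∧ p ⤳ s := by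
  rw [bClosure, @IsTopologicalBasis.mem_closure_iff X (bTop X t) _ isTopologicalBasis_bTop]
  constructor
  · intro h U hU hpU
    obtain ⟨s, ⟨hsU, hps⟩, hsS⟩ := h _ ⟨U, p, hU, hpU, rfl⟩ ⟨hpU, subset_closure rfl⟩
    exact ⟨s, hsS, hsU, specializes_iff_mem_closure.2 hps⟩
  · rintro h _ ⟨U, x, hU, -, rfl⟩ ⟨hpU, hpx⟩
    obtain ⟨s, hsS, hsU, hps⟩ := h U hU hpU
    exact ⟨s, ⟨hsU, closure_minimal (singleton_subset_iff.2 hpx) isClosed_closure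
      (specializes_iff_mem_closure.1 hps)⟩, hsS⟩

end BTopology

section BClosure

variable {X Z : Type} [TopologicalSpace Z]

lemma mem_bClosure_preimage_val [TopologicalSpace X] {C S : Set X} (hSC : S ⊆ C) {p : C}
    (hp : (p : X) ∈ bClosure S) : p ∈ bClosure (((↑) : C → X) ⁻¹' S) := by
  refine mem_bClosure_iff.2 fun U hU hpU => ?_
  obtain ⟨W, hW, rfl⟩ := isOpen_induced_iff.1 hU
  obtain ⟨s, hsS, hsW, hps⟩ := mem_bClosure_iff.1 hp W hW hpU
  exact ⟨⟨s, hSC hsS⟩, hsS, hsW, IsInducing.subtypeVal.specializes_iff.1 hps⟩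

lemma specializes_of_eqOn_of_mem_bClosure [TopologicalSpace X] {g₁ g₂ : X → Z} {S : Set X}
    (h : EqOn g₁ g₂ S) (h₁ : Continuous g₁) (h₂ : Continuous g₂) {p : X}
    (hp : p ∈ bClosure S) : g₂ p ⤳ g₁ p := by
  by_contra hne
  have hU : IsOpen (g₁ ⁻¹' {z | ¬ g₂ p ⤳ z}) := by
    simp only [specializes_iff_mem_closure]
    exact isClosed_closure.isOpen_compl.preimage h₁
  obtain ⟨s, hsS, hsU, hps⟩ := mem_bClosure_iff.1 hp _ hU hne
  exact hsU (h hsS ▸ hps.map h₂)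

lemma Set.EqOn.bClosure [TopologicalSpace X] [T0Space Z] {g₁ g₂ : X → Z} {S : Set X}
    (h : EqOn g₁ g₂ S) (h₁ : Continuous g₁) (h₂ : Continuous g₂) :
    EqOn g₁ g₂ (_root_.bClosure S) := fun _ hp =>
  ((specializes_of_eqOn_of_mem_bClosure h h₁ h₂ hp).antisymm
    (specializes_of_eqOn_of_mem_bClosure h.symm h₂ h₁ hp)).eq.symm

lemma specializes_of_preimage_closure_subset {f : X → Z} {p q : Z}
    (hp : p ∈ bClosure (range f)) (h : f ⁻¹' closure {p} ⊆ f ⁻¹' closure {q}) : q ⤳ p := by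
  by_contra hqp
  have hU : IsOpen {z | ¬ q ⤳ z} := by
    simp only [specializes_iff_mem_closure]
    exact isClosed_closure.isOpen_compl
  obtain ⟨_, ⟨x, rfl⟩, hxU, hpx⟩ := mem_bClosure_iff.1 hp _ hU hqp
  exact hxU (specializes_iff_mem_closure.2 (h (specializes_iff_mem_closure.1 hpx)))

lemma injective_preimage_closure_singleton [T0Space Z] (f : X → Z) :
    Function.Injective fun p : bClosure (range f) => f ⁻¹' closure {(p : Z)} := fun p q h =>
  Subtype.ext ((specializes_of_preimage_closure_subset q.2 h.ge).antisymm
    (specializes_of_preimage_closure_subset p.2 h.le)).eq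

end BClosure

lemma piecewise_eq_piecewise_diff_iff {X Z : Type} {a b : Z} (hne : b ≠ a) {U C : Set X}
    [∀ x, Decidable (x ∈ U)] [∀ x, Decidable (x ∈ U \ C)] {x : X} :
    U.piecewise (fun _ => b) (fun _ => a) x = (U \ C).piecewise (fun _ => b) (fun _ => a) x ↔
      x ∉ U ∩ C := by
  by_cases hU : x ∈ U <;> by_cases hC : x ∈ C <;> simp [piecewise, hU, hC, hne]

lemma continuous_piecewise_const_of_specializes {X Z : Type} [TopologicalSpace X]
    [TopologicalSpace Z] {a b : Z} (hba : b ⤳ a) {W : Set X} (hW : IsOpen W)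
    [∀ x, Decidable (x ∈ W)] : Continuous (W.piecewise (fun _ => b) (fun _ => a)) := by
  refine continuous_def.2 fun V hV => ?_
  by_cases ha : a ∈ V
  · have hb : b ∈ V := hba.mem_open hV ha
    simp [piecewise_preimage, ha, hb]
  · by_cases hb : b ∈ V
    · simpa [piecewise_preimage, ha, hb] using hW
    · simp [piecewise_preimage, ha, hb]

lemma exists_eq_iInter_compl_of_isClosed_bTop {X : Type} [t : TopologicalSpace X] {A : Set X}
    (hA : IsClosed[bTop X t] A) : ∃ (ι : Type) (U : ι → Set X) (x : ι → X),
      (∀ j, IsOpen (U j)) ∧ A = ⋂ j, (U j ∩ closure {x j})ᶜ := by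
  have hbasic : ∀ y : ↥Aᶜ, ∃ (U : Set X) (x : X), IsOpen U ∧
      (y : X) ∈ U ∩ closure {x} ∧ U ∩ closure {x} ⊆ Aᶜ := by
    rintro ⟨y, hy⟩
    obtain ⟨_, ⟨U, x, hU, -, rfl⟩, hyUx, hsub⟩ :=
      (@IsTopologicalBasis.isOpen_iff X (bTop X t) _ _ isTopologicalBasis_bTop).1
        hA.isOpen_compl y hy
    exact ⟨U, x, hU, hyUx, hsub⟩
  choose U x hU hmem hsub using hbasic
  refine ⟨↥Aᶜ, U, x, hU, Subset.antisymm (fun z hz => mem_iInter.2 fun j hzj => hsub j hzj hz)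
    fun z hz => by_contra fun hzA => mem_iInter.1 hz ⟨z, hzA⟩ (hmem ⟨z, hzA⟩)⟩

section Reflection

variable {K : SpaceClass} {X Xk : Type} [tX : TopologicalSpace X] [tk : TopologicalSpace Xk]
  {μ : X → Xk}

lemma IsReflection.ext (hμ : IsReflection K tX tk μ) {Z : Type} [tZ : TopologicalSpace Z]
    (hZ : K Z tZ) {g₁ g₂ : Xk → Z} (h₁ : Continuous g₁) (h₂ : Continuous g₂)
    (h : g₁ ∘ μ = g₂ ∘ μ) : g₁ = g₂ :=
  (hμ.2.2 Z tZ hZ (g₁ ∘ μ) (h₁.comp hμ.2.1)).unique ⟨h₁, rfl⟩ ⟨h₂, h.symm⟩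

lemma IsReflection.mem_of_leftInverse_s8 (hHomeo : ClosedUnderHomeo K)
    (hμ : IsReflection K tX tk μ) {G : Xk → X} (hG : Continuous G)
    (hGμ : Function.LeftInverse G μ) : K X tX :=
  hHomeo Xk X tk tX hμ.1
    ⟨{ toFun := G
       invFun := μ
       left_inv := congrFun (hμ.ext hμ.1 (hμ.2.1.comp hG) continuous_id
         (funext fun x => congrArg μ (hGμ x)))
       right_inv := hGμ
       continuous_toFun := hG
       continuous_invFun := hμ.2.1 }⟩

end Reflection

section ForwardDirection

variable {K : SpaceClass}

lemma productive_of_isReflective (hT0 : AllT0 K) (hHomeo : ClosedUnderHomeo K)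
    (hRefl : IsReflective K) : Productive K := by
  intro I X t hK
  have : ∀ i, T0Space (X i) := fun i => hT0 _ _ (hK i)
  obtain ⟨Xk, tk, μ, hμ⟩ := hRefl (∀ i, X i) Pi.topologicalSpace inferInstance
  choose g hg using fun i => (hμ.2.2 _ _ (hK i) _ (continuous_apply i)).exists
  exact hμ.mem_of_leftInverse_s8 hHomeo (continuous_pi fun i => (hg i).1)
    fun x => funext fun i => congrFun (hg i).2 x

lemma hasEqualizers_of_isReflective (hT0 : AllT0 K) (hHomeo : ClosedUnderHomeo K)
    (hRefl : IsReflective K) : HasEqualizers K := by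
  intro X Y tX tY hX hY f g hf hg
  have := hT0 X tX hX
  let E : Set X := {x | f x = g x}
  obtain ⟨Ek, tk, μ, hμ⟩ := hRefl E (subTop tX E) Subtype.t0Space
  obtain ⟨h, ⟨hh, hhμ⟩, -⟩ := hμ.2.2 X tX hX _ continuous_subtype_val
  have hfg : f ∘ h = g ∘ h := hμ.ext hY (hf.comp hh) (hg.comp hh) <| by
    funext x
    change f ((h ∘ μ) x) = g ((h ∘ μ) x)
    rw [hhμ]
    exact x.2
  exact hμ.mem_of_leftInverse_s8 hHomeo (hh.subtype_mk (congrFun hfg))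
    fun x => Subtype.ext (congrFun hhμ x)

lemma bClosedHereditary_of_productive_of_hasEqualizers (hNotT1 : NotSubT1 K)
    (hprod : Productive K) (heq : HasEqualizers K) : BClosedHereditary K := by
  intro X tX A hX hA
  obtain ⟨Z, tZ, hZ, hZT1⟩ := hNotT1
  obtain ⟨b, a, hba, hne⟩ : ∃ b a : Z, b ⤳ a ∧ b ≠ a := by
    simpa [t1Space_iff_specializes_imp_eq] using hZT1
  obtain ⟨ι, U, x, hU, rfl⟩ := exists_eq_iInter_compl_of_isClosed_bTop hA
  classical
  let F : X → ι → Z := fun z j => (U j).piecewise (fun _ => b) (fun _ => a) z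
  let G : X → ι → Z := fun z j => (U j \ closure {x j}).piecewise (fun _ => b) (fun _ => a) z
  have hFG : {z | F z = G z} = ⋂ j, (U j ∩ closure {x j})ᶜ := by
    ext z
    simp only [F, G, mem_ofPred_eq, funext_iff, piecewise_eq_piecewise_diff_iff hne, mem_iInter,
      mem_compl_iff]
  rw [← hFG]
  exact heq X (ι → Z) tX _ hX (hprod _ _ _ fun _ => hZ) F G
    (continuous_pi fun j => continuous_piecewise_const_of_specializes hba (hU j))
    (continuous_pi fun j =>
      continuous_piecewise_const_of_specializes hba ((hU j).sdiff isClosed_closure))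

end ForwardDirection

section BackwardDirection

variable {K : SpaceClass}

lemma ClosedUnderHomeo.mem_induced_symm (hHomeo : ClosedUnderHomeo K) {Y T : Type}
    [tY : TopologicalSpace Y] (hY : K Y tY) (e : Y ≃ T) :
    K T (induced e.symm tY) :=
  letI : TopologicalSpace T := induced e.symm tY
  hHomeo Y T tY _ hY
    ⟨{ toEquiv := e
       continuous_toFun := continuous_induced_rng.2 (by simpa using continuous_id)
       continuous_invFun := continuous_induced_dom }⟩

/-- Carrying the space on a set of subsets of `X` keeps the family of all these small. -/
structure SmallKMap (K : SpaceClass) (X : Type) [TopologicalSpace X] where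
  carrier : Set (Set X)
  topology : TopologicalSpace carrier
  mem : K carrier topology
  toFun : X → carrier
  continuous_toFun : Continuous[_, topology] toFun

instance {X : Type} [TopologicalSpace X] (i : SmallKMap K X) : TopologicalSpace i.carrier :=
  i.topology

lemma SmallKMap.exists_factor (hHomeo : ClosedUnderHomeo K) (hbc : BClosedHereditary K)
    {X Z : Type} [TopologicalSpace X] [tZ : TopologicalSpace Z] [T0Space Z] (hZ : K Z tZ)
    {f : X → Z} (hf : Continuous f) :
    ∃ (i : SmallKMap K X) (g : i.carrier → Z), Continuous g ∧ g ∘ i.toFun = f := by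
  let D := bClosure (range f)
  have hfD : ∀ x, f x ∈ D := fun x => subset_bClosure _ ⟨x, rfl⟩
  let e := Equiv.ofInjective _ (injective_preimage_closure_singleton f)
  let _ : TopologicalSpace (range fun p : D => f ⁻¹' closure {(p : Z)}) :=
    induced e.symm inferInstance
  refine ⟨⟨_, _, hHomeo.mem_induced_symm (hbc Z tZ D hZ (@isClosed_closure Z (bTop Z tZ) _)) e,
    fun x => e ⟨f x, hfD x⟩, continuous_induced_rng.2 ?_⟩, fun s => (e.symm s).val,
    continuous_subtype_val.comp continuous_induced_dom, funext fun x => ?_⟩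
  · simp only [Function.comp_def, Equiv.symm_apply_apply]
    exact hf.subtype_mk hfD
  · simp

lemma isReflective_of_productive_of_bClosedHereditary (hT0 : AllT0 K)
    (hHomeo : ClosedUnderHomeo K) (hprod : Productive K) (hbc : BClosedHereditary K) :
    IsReflective K := by
  intro X tX _
  let η : X → ∀ i : SmallKMap K X, i.carrier := fun x i => i.toFun x
  let C := bClosure (range η)
  let μ : X → C := fun x => ⟨η x, subset_bClosure _ ⟨x, rfl⟩⟩
  have hμ : Continuous μ := (continuous_pi fun i => i.continuous_toFun).subtype_mk _
  refine ⟨C, _, μ, hbc _ _ C (hprod _ _ _ fun i => i.mem) (@isClosed_closure _ (bTop _ _) _),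
    hμ, fun Z tZ hZ f hf => ?_⟩
  have := hT0 Z tZ hZ
  obtain ⟨i, g, hg, rfl⟩ := SmallKMap.exists_factor hHomeo hbc hZ hf
  have hgi : Continuous fun p : C => g (p.val i) :=
    hg.comp ((continuous_apply i).comp continuous_subtype_val)
  refine ⟨fun p => g (p.val i), ⟨hgi, rfl⟩, fun g' ⟨hg', hg'μ⟩ => funext fun p => ?_⟩
  have hagree : EqOn g' (fun p : C => g (p.val i)) (Subtype.val ⁻¹' range η) := by
    rintro q ⟨x, hx⟩
    obtain rfl : q = μ x := Subtype.ext hx.symm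
    exact congrFun hg'μ x
  exact hagree.bClosure hg' hgi (mem_bClosure_preimage_val (subset_bClosure _) p.2)

end BackwardDirection

/-- a full subcategory of Top₀ closed under homeomorphisms containing a non-T₁
space is reflective iff it is productive and b-closed-hereditary. -/
theorem statement8 (K : SpaceClass) (hT0 : AllT0 K) (hHomeo : ClosedUnderHomeo K)
    (hNotT1 : NotSubT1 K) :
    IsReflective K ↔ (Productive K ∧ BClosedHereditary K) := by
  constructor
  · intro hRefl
    have hprod := productive_of_isReflective hT0 hHomeo hRefl
    exact ⟨hprod, bClosedHereditary_of_productive_of_hasEqualizers hNotT1 hprod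
      (hasEqualizers_of_isReflective hT0 hHomeo hRefl)⟩
  · rintro ⟨hprod, hbc⟩
    exact isReflective_of_productive_of_bClosedHereditary hT0 hHomeo hprod hbc
end

section
/- Let K be a full subcategory of Top₀ closed under homeomorphisms such that (Σ2)^M ∈ K for every set M. Then K has equalizers (i.e., for all X, Y ∈ K and all continuous f, g : X → Y, the subspace {x ∈ X : f(x) = g(x)} belongs to K) if and only if K is b-closed-hereditary. -/
/-!
If `f y ≠ g y` for maps into a T₀ space, some open `V` contains exactly one of them, say
`f y ∈ V ∌ g y`; since `g` preserves specialization, the basic b-open set `f⁻¹V ∩ cl{y}` then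
misses the equalizer of `f` and `g`, so equalizers are b-closed. Conversely, a b-closed set `A`
is the equalizer of the two maps into a power of `Σ2` whose coordinates, indexed by the basic
b-open sets `U ∩ cl{x}` missing `A`, are `z ↦ (z ∈ U)` and `z ↦ (z ∈ U \ cl{x})`.
-/

open TopologicalSpace

open Topology

variable {X : Type} [t : TopologicalSpace X]

def bBasis (X : Type) [TopologicalSpace X] : Set (Set X) :=
  {s | ∃ (U : Set X) (x : X), IsOpen U ∧ x ∈ U ∧ s = U ∩ closure {x}}

theorem isTopologicalBasis_bBasis : @IsTopologicalBasis X (bTop X t) (bBasis X) := by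
  refine @IsTopologicalBasis.mk X (bTop X t) _ ?_ ?_ rfl
  · rintro _ ⟨U₁, x₁, hU₁, -, rfl⟩ _ ⟨U₂, x₂, hU₂, -, rfl⟩ y ⟨⟨hy₁, hx₁y⟩, hy₂, hx₂y⟩
    refine ⟨(U₁ ∩ U₂) ∩ closure {y}, ⟨_, y, hU₁.inter hU₂, ⟨hy₁, hy₂⟩, rfl⟩,
      ⟨⟨hy₁, hy₂⟩, subset_closure rfl⟩, ?_⟩
    rintro z ⟨⟨hz₁, hz₂⟩, hyz⟩
    exact ⟨⟨hz₁, (specializes_iff_mem_closure.2 hx₁y).closure_subset hyz⟩,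
      ⟨hz₂, (specializes_iff_mem_closure.2 hx₂y).closure_subset hyz⟩⟩
  · exact Set.eq_univ_of_forall fun y =>
      ⟨_, ⟨Set.univ, y, isOpen_univ, trivial, rfl⟩, trivial, subset_closure rfl⟩

theorem isOpen_bTop_iff {s : Set X} :
    IsOpen[bTop X t] s ↔ ∀ y ∈ s, ∃ b ∈ bBasis X, y ∈ b ∧ b ⊆ s :=
  @IsTopologicalBasis.isOpen_iff X (bTop X t) _ _ isTopologicalBasis_bBasis

theorem exists_bBasis_mem_subset_compl_setOf_eq {Y : Type} [TopologicalSpace Y] {f g : X → Y}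
    (hf : Continuous f) (hg : Continuous g) {V : Set Y} (hV : IsOpen V) {y : X}
    (hfy : f y ∈ V) (hgy : g y ∉ V) :
    ∃ s ∈ bBasis X, y ∈ s ∧ s ⊆ {x | f x = g x}ᶜ := by
  refine ⟨f ⁻¹' V ∩ closure {y}, ⟨_, y, hV.preimage hf, hfy, rfl⟩,
    ⟨hfy, subset_closure rfl⟩, ?_⟩
  rintro z ⟨hfz, hyz⟩ (hfgz : f z = g z)
  exact hgy (((specializes_iff_mem_closure.2 hyz).map hg).mem_open hV (hfgz ▸ hfz))

theorem isClosed_bTop_setOf_eq {Y : Type} [TopologicalSpace Y] [T0Space Y] {f g : X → Y}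
    (hf : Continuous f) (hg : Continuous g) : IsClosed[bTop X t] {x | f x = g x} := by
  rw [← @isOpen_compl_iff X _ (bTop X t), isOpen_bTop_iff]
  intro y (hy : f y ≠ g y)
  obtain ⟨V, hV, ⟨hfy, hgy⟩ | ⟨hgy, hfy⟩⟩ := exists_isOpen_xor_mem hy
  · exact exists_bBasis_mem_subset_compl_setOf_eq hf hg hV hfy hgy
  · simpa only [eq_comm] using exists_bBasis_mem_subset_compl_setOf_eq hg hf hV hgy hfy

theorem exists_sierpinski_pow_setOf_eq_eq_of_isClosed_bTop {A : Set X}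
    (hA : IsClosed[bTop X t] A) :
    ∃ (M : Type) (F G : X → M → Prop), Continuous F ∧ Continuous G ∧ {z | F z = G z} = A := by
  let M := {p : Set X × X // IsOpen p.1 ∧ Disjoint (p.1 ∩ closure {p.2}) A}
  refine ⟨M, fun z m => z ∈ m.1.1, fun z m => z ∈ m.1.1 \ closure {m.1.2},
    continuous_pi fun m => continuous_Prop.2 m.2.1,
    continuous_pi fun m => continuous_Prop.2 (m.2.1.sdiff isClosed_closure), ?_⟩
  ext z
  simp only [Set.mem_ofPred_eq, funext_iff, eq_iff_iff, Set.mem_sdiff, iff_self_and]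
  constructor
  · intro hz
    by_contra hzA
    obtain ⟨_, ⟨U, x, hU, -, rfl⟩, ⟨hzU, hxz⟩, hA'⟩ :=
      isOpen_bTop_iff.1 hA.isOpen_compl z hzA
    exact hz ⟨(U, x), hU, Set.subset_compl_iff_disjoint_right.1 hA'⟩ hzU hxz
  · exact fun hzA m hzU hxz => Set.disjoint_left.1 m.2.2 ⟨hzU, hxz⟩ hzA

theorem statement10_general (K : SpaceClass) (hT0 : AllT0 K)
    (hPow : ∀ M : Type, K (M → Prop) (Pi.topologicalSpace (t₂ := fun _ => sierpinskiSpace))) :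
    HasEqualizers K ↔ BClosedHereditary K := by
  constructor
  · intro hEq X tX A hKX hA
    obtain ⟨M, F, G, hF, hG, rfl⟩ := exists_sierpinski_pow_setOf_eq_eq_of_isClosed_bTop hA
    exact hEq X (M → Prop) tX _ hKX (hPow M) F G hF hG
  · intro hB X Y tX tY hKX hKY f g hf hg
    have := hT0 Y tY hKY
    exact hB X tX _ hKX (isClosed_bTop_setOf_eq hf hg)

/-- if a full subcategory `K` of Top₀ closed under homeomorphisms contains all
powers `(Σ2)^M` of the Sierpiński space, then `K` has equalizers iff it is
b-closed-hereditary. -/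
theorem statement10 (K : SpaceClass) (hT0 : AllT0 K) (hHomeo : ClosedUnderHomeo K)
    (hPow : ∀ M : Type, K (M → Prop) (Pi.topologicalSpace (t₂ := fun _ => sierpinskiSpace))) :
    HasEqualizers K ↔ BClosedHereditary K :=
  statement10_general K hT0 hPow
end

section
/- Let K be a reflective full subcategory of Top₀ closed under homeomorphisms such that K ⊄ Top₁. If {X_i : i ∈ I} is a family of subsets of a sober space Z such that each subspace X_i belongs to K, then the subspace ⋂_{i∈I} X_i of Z belongs to K. -/
open TopologicalSpace

/-!
Reflectivity alone makes `K` closed under retracts among T₀ spaces, so a non-T₁ member of `K`,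
which has a Sierpiński subspace as a retract, puts the Sierpiński space `Prop` in `K`. Maps into
the Sierpiński space are open sets, so the reflection `μ : Z → Zᵏ` of any T₀ space induces a
bijection between the open sets of `Zᵏ` and those of `Z`. For sober `Z` this makes `μ` a
homeomorphism: the preimage of `cl {q}` is irreducible and closed, and its generic point is sent
to a point with the same closure as `q`. Hence `Z ∈ K`. Finally, if `Z ∈ K` then the reflection of
`A = ⋂ᵢ Xᵢ` extends the inclusion `A → Z` to a map `Aᵏ → Z` which, by uniqueness of extensions,
factors through every `Xᵢ`; it therefore lands in `A` and is a left inverse of `μ`.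
-/

open Topology Set Function

namespace IsReflection

variable {K : SpaceClass} {X Xk : Type} [tX : TopologicalSpace X] [tk : TopologicalSpace Xk]
  {μ : X → Xk}

theorem exists_lift (h : IsReflection K tX tk μ) {Y : Type} [tY : TopologicalSpace Y]
    (hY : K Y tY) {f : X → Y} (hf : Continuous f) : ∃ g : Xk → Y, Continuous g ∧ g ∘ μ = f :=
  (h.2.2 Y tY hY f hf).exists

theorem hom_ext_s12 (h : IsReflection K tX tk μ) {Y : Type} [tY : TopologicalSpace Y] (hY : K Y tY)
    {g₁ g₂ : Xk → Y} (hg₁ : Continuous g₁) (hg₂ : Continuous g₂) (he : g₁ ∘ μ = g₂ ∘ μ) :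
    g₁ = g₂ :=
  (h.2.2 Y tY hY _ (hg₂.comp h.2.1)).unique ⟨hg₁, he⟩ ⟨hg₂, rfl⟩

theorem mem_of_leftInverse_s12 (hHomeo : ClosedUnderHomeo K) (h : IsReflection K tX tk μ)
    {r : Xk → X} (hr : Continuous r) (hrμ : r ∘ μ = id) : K X tX := by
  have hμr : μ ∘ r = id :=
    h.hom_ext_s12 h.1 (h.2.1.comp hr) continuous_id (by rw [comp_assoc, hrμ]; rfl)
  exact hHomeo Xk X tk tX h.1 ⟨⟨⟨r, μ, congrFun hμr, congrFun hrμ⟩, hr, h.2.1⟩⟩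

theorem eq_of_isOpen_of_preimage_eq (h : IsReflection K tX tk μ) (hS : K Prop sierpinskiSpace)
    {V V' : Set Xk} (hV : IsOpen V) (hV' : IsOpen V') (he : μ ⁻¹' V = μ ⁻¹' V') : V = V' :=
  h.hom_ext_s12 hS (continuous_Prop.2 hV) (continuous_Prop.2 hV') he

theorem isInducing (h : IsReflection K tX tk μ) (hS : K Prop sierpinskiSpace) :
    IsInducing μ := by
  refine ⟨le_antisymm h.2.1.le_induced fun U hU => isOpen_induced_iff.2 ?_⟩
  obtain ⟨g, hg, hgμ⟩ := h.exists_lift hS (continuous_Prop.2 hU)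
  exact ⟨{q | g q}, continuous_Prop.1 hg, hgμ⟩

theorem closure_image_preimage_eq (h : IsReflection K tX tk μ) (hS : K Prop sierpinskiSpace)
    {F : Set Xk} (hF : IsClosed F) : closure (μ '' (μ ⁻¹' F)) = F := by
  have hsub : closure (μ '' (μ ⁻¹' F)) ⊆ F := closure_minimal (image_preimage_subset μ F) hF
  refine compl_injective (h.eq_of_isOpen_of_preimage_eq hS isClosed_closure.isOpen_compl
    hF.isOpen_compl ?_)
  have hpre : μ ⁻¹' closure (μ '' (μ ⁻¹' F)) = μ ⁻¹' F :=
    (preimage_mono hsub).antisymm ((subset_preimage_image μ _).trans (preimage_mono subset_closure))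
  rw [preimage_compl, preimage_compl, hpre]

end IsReflection

open Classical in
theorem continuous_ite_of_specializes {X : Type} [TopologicalSpace X] {x y : X} (h : x ⤳ y) :
    Continuous fun p : Prop => if p then x else y := by
  refine continuous_iff_continuousAt.2 fun p => ?_
  by_cases hp : p
  · simpa [ContinuousAt, hp, Filter.tendsto_iff_forall_eventually_mem] using
      fun s => mem_of_mem_nhds
  · simp only [ContinuousAt, hp, nhds_false, Filter.tendsto_iff_forall_eventually_mem,
      Filter.eventually_top, if_false]
    intro s hs q
    by_cases hq : q <;> simp [hq, mem_of_mem_nhds hs, mem_of_mem_nhds (h hs)]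

namespace IsReflective

variable {K : SpaceClass}

theorem mem_of_retract_s12 (hRefl : IsReflective K) (hHomeo : ClosedUnderHomeo K) {X Y : Type}
    [tX : TopologicalSpace X] [tY : TopologicalSpace Y] [T0Space Y] (hX : K X tX) {s : Y → X}
    {r : X → Y} (hs : Continuous s) (hr : Continuous r) (hrs : r ∘ s = id) : K Y tY := by
  obtain ⟨Yk, tk, μ, h⟩ := hRefl Y tY inferInstance
  obtain ⟨g, hg, hgμ⟩ := h.exists_lift hX hs
  exact h.mem_of_leftInverse_s12 hHomeo (hr.comp hg) (by rw [comp_assoc, hgμ, hrs])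

theorem sierpinskiSpace_mem (hRefl : IsReflective K) (hHomeo : ClosedUnderHomeo K)
    (hT0 : AllT0 K) (hNotT1 : NotSubT1 K) : K Prop sierpinskiSpace := by
  obtain ⟨X, tX, hX, hnT1⟩ := hNotT1
  have := hT0 X tX hX
  obtain ⟨x, y, hxy, hne⟩ : ∃ x y : X, x ⤳ y ∧ x ≠ y := by
    simpa [t1Space_iff_specializes_imp_eq] using hnT1
  obtain ⟨U, hU, hxU, hyU⟩ : ∃ U : Set X, IsOpen U ∧ x ∈ U ∧ y ∉ U := by
    simpa [specializes_iff_forall_open] using fun hyx : y ⤳ x => hne (hxy.antisymm hyx).eq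
  refine hRefl.mem_of_retract_s12 hHomeo hX (continuous_ite_of_specializes hxy)
    (continuous_Prop.2 hU : Continuous (· ∈ U)) (funext fun p => ?_)
  by_cases hp : p <;> simp [hp, hxU, hyU]

theorem mem_of_quasiSober (hRefl : IsReflective K) (hHomeo : ClosedUnderHomeo K)
    (hT0 : AllT0 K) (hS : K Prop sierpinskiSpace) {Z : Type} [tZ : TopologicalSpace Z]
    [T0Space Z] [QuasiSober Z] : K Z tZ := by
  obtain ⟨Zk, tk, μ, h⟩ := hRefl Z tZ inferInstance
  have := hT0 Zk tk h.1
  have hμ : IsEmbedding μ := (h.isInducing hS).isEmbedding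
  have hsurj : Surjective μ := by
    intro q
    have hC : closure (μ '' (μ ⁻¹' closure {q})) = closure {q} :=
      h.closure_image_preimage_eq hS isClosed_closure
    have hirr : IsIrreducible (μ ⁻¹' closure {q}) := by
      have := isIrreducible_iff_closure.1 (hC ▸ isIrreducible_singleton.closure)
      rw [isIrreducible_iff_irreducibleSpace] at this ⊢
      exact (hμ.homeomorphImage _).irreducibleSpace_iff.2 this
    obtain ⟨p, hp⟩ := QuasiSober.sober hirr (isClosed_closure.preimage h.2.1)
    exact ⟨p, (hC ▸ hp.image h.2.1).eq isGenericPoint_closure⟩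
  exact hHomeo Zk Z tk tZ h.1 ⟨(hμ.toHomeomorphOfSurjective hsurj).symm⟩

theorem iInter_mem (hRefl : IsReflective K) (hHomeo : ClosedUnderHomeo K) {Z : Type}
    [tZ : TopologicalSpace Z] [T0Space Z] (hZ : K Z tZ) {I : Type} (X : I → Set Z)
    (hX : ∀ i, K (X i) (subTop tZ (X i))) :
    K (⋂ i, X i) (subTop tZ (⋂ i, X i)) := by
  obtain ⟨Ak, tk, μ, h⟩ := hRefl _ (subTop tZ (⋂ i, X i)) Subtype.t0Space
  obtain ⟨g, hg, hgμ⟩ := h.exists_lift hZ continuous_subtype_val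
  have hmem : ∀ q i, g q ∈ X i := fun q i => by
    obtain ⟨gi, hgi, hgiμ⟩ := h.exists_lift (hX i) (continuous_inclusion (iInter_subset X i))
    have : Subtype.val ∘ gi = g :=
      h.hom_ext_s12 hZ (continuous_subtype_val.comp hgi) hg (by rw [comp_assoc, hgiμ, hgμ]; rfl)
    exact this ▸ (gi q).2
  exact h.mem_of_leftInverse_s12 hHomeo (r := fun q => ⟨g q, mem_iInter.2 (hmem q)⟩)
    (hg.subtype_mk _) (funext fun a => Subtype.ext (congrFun hgμ a))

end IsReflective

/-- if `K` is a reflective full subcategory of Top₀ closed under homeomorphisms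
containing a non-T₁ space and `{Xᵢ : i ∈ I}` is a family of subsets of a sober space `Z` all of
whose subspaces lie in `K`, then the subspace `⋂ᵢ Xᵢ` lies in `K`. -/
theorem statement12 (K : SpaceClass) (hT0 : AllT0 K) (hHomeo : ClosedUnderHomeo K)
    (hRefl : IsReflective K) (hNotT1 : NotSubT1 K)
    (Z : Type) (tZ : TopologicalSpace Z) (hZ : Sober Z tZ)
    (I : Type) (Xi : I → Set Z) (hXi : ∀ i, K (Xi i) (subTop tZ (Xi i))) :
    K (⋂ i, Xi i) (subTop tZ (⋂ i, Xi i)) := by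
  have := hZ.1
  have := hZ.2
  have hS := hRefl.sierpinskiSpace_mem hHomeo hT0 hNotT1
  exact hRefl.iInter_mem hHomeo (hRefl.mem_of_quasiSober hHomeo hT0 hS) Xi hXi
end
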